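/- Let k be a field, C a k-coalgebra and R a k-algebra such that there is a k-linear equivalence of categories between the category Mod_R of right R-modules and the category Mod^C of right C-comodules. Then both R and C are finite dimensional over k. -/

import Mathlib

/-!
By the fundamental theorem of comodules, every comodule `A` is the directed union of its
finite-dimensional subcomodules. Under the equivalence `E` these become a directed family of
submodules exhausting `E⁻¹ A`; when `E⁻¹ A` is finitely generated one of them is everything, so
`A` is finite dimensional.

This applies to `P = E R_R`. Hence `R ≅ End(R_R) ≅ End(P)` is finite dimensional, and so is
`E⁻¹ C ≅ Hom(R_R, E⁻¹ C) ≅ Hom(P, C)`, which embeds into the dual of `P` via the counit. So `E⁻¹ C`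
is finitely generated and `C` is finite dimensional.
-/

open TensorProduct CategoryTheory CategoryTheory.Limits
noncomputable section
universe u
variable (k : Type u) [Field k]
variable (C : Type u) [AddCommGroup C] [Module k C] [Coalgebra k C]

def gCounitLast (X : Type u) [AddCommGroup X] [Module k X] :
    (X ⊗[k] C) →ₗ[k] X :=
  (TensorProduct.rid k X).toLinearMap ∘ₗ LinearMap.lTensor X Coalgebra.counit

def gComulLast (X : Type u) [AddCommGroup X] [Module k X] :
    (X ⊗[k] C) →ₗ[k] (X ⊗[k] C) ⊗[k] C :=
  (TensorProduct.assoc k X C C).symm.toLinearMap ∘ₗ LinearMap.lTensor X Coalgebra.comul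

structure GComod where
  carrier : Type u
  [isAddCommGroup : AddCommGroup carrier]
  [isModule : Module k carrier]
  ρ : carrier →ₗ[k] carrier ⊗[k] C
  counit : gCounitLast k C carrier ∘ₗ ρ = LinearMap.id
  coassoc : gComulLast k C carrier ∘ₗ ρ = LinearMap.rTensor C ρ ∘ₗ ρ

attribute [instance] GComod.isAddCommGroup GComod.isModule

/-- The `k`-module of comodule morphisms, as a submodule of the space of linear maps. -/
def gHom (A B : GComod k C) : Submodule k (A.carrier →ₗ[k] B.carrier) where
  carrier := { f | LinearMap.rTensor C f ∘ₗ A.ρ = B.ρ ∘ₗ f }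
  zero_mem' := by
    simp only [Set.mem_setOf_eq, LinearMap.rTensor_zero, LinearMap.zero_comp,
      LinearMap.comp_zero]
  add_mem' := by
    intro f g hf hg
    simp only [Set.mem_setOf_eq] at hf hg ⊢
    rw [LinearMap.rTensor_add, LinearMap.add_comp, hf, hg, LinearMap.comp_add]
  smul_mem' := by
    intro c f hf
    simp only [Set.mem_setOf_eq] at hf ⊢
    rw [LinearMap.rTensor_smul, LinearMap.smul_comp, hf, LinearMap.comp_smul]

instance : Category.{u} (GComod k C) where
  Hom A B := gHom k C A B
  id A := ⟨LinearMap.id, by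
    change LinearMap.rTensor C LinearMap.id ∘ₗ A.ρ = A.ρ ∘ₗ LinearMap.id
    rw [LinearMap.rTensor_id, LinearMap.id_comp, LinearMap.comp_id]⟩
  comp {A B D} f g := ⟨g.1 ∘ₗ f.1, by
    have hf : LinearMap.rTensor C f.1 ∘ₗ A.ρ = B.ρ ∘ₗ f.1 := f.2
    have hg : LinearMap.rTensor C g.1 ∘ₗ B.ρ = D.ρ ∘ₗ g.1 := g.2
    change LinearMap.rTensor C (g.1 ∘ₗ f.1) ∘ₗ A.ρ = D.ρ ∘ₗ (g.1 ∘ₗ f.1)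
    rw [LinearMap.rTensor_comp, LinearMap.comp_assoc, hf, ← LinearMap.comp_assoc, hg,
      LinearMap.comp_assoc]⟩
  id_comp f := by apply Subtype.ext; simp
  comp_id f := by apply Subtype.ext; simp
  assoc f g h := by apply Subtype.ext; simp [LinearMap.comp_assoc]

def gforget : GComod k C ⥤ ModuleCat.{u} k where
  obj A := ModuleCat.of k A.carrier
  map f := ModuleCat.ofHom f.1
  map_id _ := rfl
  map_comp _ _ := rfl

instance (A B : GComod k C) : AddCommGroup (A ⟶ B) :=
  inferInstanceAs (AddCommGroup (gHom k C A B))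

instance : Preadditive (GComod k C) where
  add_comp A B D f g h := by
    apply Subtype.ext
    change h.1 ∘ₗ (f.1 + g.1) = h.1 ∘ₗ f.1 + h.1 ∘ₗ g.1
    rw [LinearMap.comp_add]
  comp_add A B D f g h := by
    apply Subtype.ext
    change (g.1 + h.1) ∘ₗ f.1 = g.1 ∘ₗ f.1 + h.1 ∘ₗ f.1
    rw [LinearMap.add_comp]

instance : CategoryTheory.Linear k (GComod k C) where
  homModule A B := inferInstanceAs (Module k (gHom k C A B))
  smul_comp A B D c f g := by
    apply Subtype.ext
    change g.1 ∘ₗ (c • f.1) = c • (g.1 ∘ₗ f.1)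
    rw [LinearMap.comp_smul]
  comp_smul A B D f c g := by
    apply Subtype.ext
    change (c • g.1) ∘ₗ f.1 = c • (g.1 ∘ₗ f.1)
    rw [LinearMap.smul_comp]

open LinearMap

section

variable {k}
variable {X Y D : Type*} [AddCommGroup X] [Module k X] [AddCommGroup Y] [Module k Y]
  [AddCommGroup D] [Module k D]

def sliceRight (φ : D →ₗ[k] k) : X ⊗[k] D →ₗ[k] X :=
  (TensorProduct.rid k X).toLinearMap ∘ₗ φ.lTensor X

@[simp]
theorem sliceRight_tmul (φ : D →ₗ[k] k) (x : X) (d : D) :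
    sliceRight φ (x ⊗ₜ[k] d) = φ d • x := by
  simp [sliceRight]

theorem sliceRight_rTensor (φ : D →ₗ[k] k) (f : X →ₗ[k] Y) (u : X ⊗[k] D) :
    sliceRight φ (f.rTensor D u) = f (sliceRight φ u) := by
  induction u using TensorProduct.induction_on with
  | zero => simp
  | tmul x c => simp
  | add u v hu hv => simp [hu, hv]

theorem sliceRight_comp_assoc_symm (φ : D →ₗ[k] k) :
    sliceRight φ ∘ₗ (TensorProduct.assoc k X Y D).symm.toLinearMap =
      (sliceRight φ).lTensor X := by
  ext x y d
  simp

theorem exists_finset_mem_range_rTensor_span (u : X ⊗[k] D) :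
    ∃ s : Finset X, u ∈ range ((Submodule.span k (s : Set X)).subtype.rTensor D) ∧
      ∀ x ∈ s, ∃ φ : D →ₗ[k] k, sliceRight φ u = x := by
  classical
  -- `s` is the set of coefficients of `u` in a basis of `D`.
  let b := Module.Basis.ofVectorSpace k D
  let e := TensorProduct.equivFinsuppOfBasisRight (M := X) b
  refine ⟨(e u).support.image (e u), ?_, ?_⟩
  · set V := Submodule.span k (((e u).support.image (e u) : Finset X) : Set X)
    have hsum : ((e u).sum fun j x => x ⊗ₜ[k] b j) ∈ range (V.subtype.rTensor D) :=
      Submodule.finsuppSum_mem _ _ _ _ fun j hj => ⟨⟨e u j, Submodule.subset_span <|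
        Finset.mem_image_of_mem _ (Finsupp.mem_support_iff.2 hj)⟩ ⊗ₜ b j, rfl⟩
    rwa [← TensorProduct.equivFinsuppOfBasisRight_symm_apply, e.symm_apply_apply] at hsum
  · simp only [Finset.mem_image]
    rintro _ ⟨j, -, rfl⟩
    exact ⟨b.coord j, (TensorProduct.equivFinsuppOfBasisRight_apply b u j).symm⟩

theorem range_rTensor_subtype_mono {W₁ W₂ : Submodule k X} (h : W₁ ≤ W₂) :
    range (W₁.subtype.rTensor D) ≤ range (W₂.subtype.rTensor D) := by
  rw [← Submodule.subtype_comp_inclusion W₁ W₂ h, rTensor_comp]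
  exact range_comp_le_range _ _

theorem injective_rTensor_subtype (W : Submodule k X) :
    Function.Injective (W.subtype.rTensor D) :=
  Module.Flat.rTensor_preserves_injective_linearMap _ W.injective_subtype

end

section

variable {k} {C}
variable {X Y : Type u} [AddCommGroup X] [Module k X] [AddCommGroup Y] [Module k Y]

theorem gCounitLast_eq_sliceRight : gCounitLast k C X = sliceRight Coalgebra.counit := rfl

theorem sliceRight_comp_gComulLast (φ : C →ₗ[k] k) :
    sliceRight φ ∘ₗ gComulLast k C X = (sliceRight φ ∘ₗ Coalgebra.comul).lTensor X := by
  rw [gComulLast, ← comp_assoc, sliceRight_comp_assoc_symm, lTensor_comp]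

theorem gComulLast_comp_rTensor (f : X →ₗ[k] Y) :
    gComulLast k C Y ∘ₗ f.rTensor C = (f.rTensor C).rTensor C ∘ₗ gComulLast k C X := by
  rw [gComulLast, gComulLast, comp_assoc, lTensor_comp_rTensor, ← rTensor_comp_lTensor,
    ← comp_assoc, ← comp_assoc]
  congr 1
  ext x c d
  simp

end

namespace GComod

variable {k} {C}

section

variable {X : Type u} [AddCommGroup X] [Module k X]

def ofInjective (A : GComod k C) (f : X →ₗ[k] A.carrier) (hf : Function.Injective f)
    (ρ : X →ₗ[k] X ⊗[k] C) (hρ : f.rTensor C ∘ₗ ρ = A.ρ ∘ₗ f) : GComod k C where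
  carrier := X
  ρ := ρ
  counit := by
    refine LinearMap.ext fun x => hf ?_
    have hx := LinearMap.congr_fun hρ x
    rw [LinearMap.comp_apply, LinearMap.comp_apply] at hx
    rw [LinearMap.comp_apply, gCounitLast_eq_sliceRight, ← sliceRight_rTensor, hx,
      ← gCounitLast_eq_sliceRight, ← LinearMap.comp_apply, A.counit, LinearMap.id_apply,
      LinearMap.id_apply]
  coassoc := by
    have hff := Module.Flat.rTensor_preserves_injective_linearMap (M := C) _
      (Module.Flat.rTensor_preserves_injective_linearMap (M := C) f hf)
    have key : (f.rTensor C).rTensor C ∘ₗ gComulLast k C X ∘ₗ ρ =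
        (f.rTensor C).rTensor C ∘ₗ ρ.rTensor C ∘ₗ ρ :=
      calc (f.rTensor C).rTensor C ∘ₗ gComulLast k C X ∘ₗ ρ
          = gComulLast k C A.carrier ∘ₗ A.ρ ∘ₗ f := by
            rw [← comp_assoc, ← gComulLast_comp_rTensor, comp_assoc, hρ]
        _ = A.ρ.rTensor C ∘ₗ A.ρ ∘ₗ f := by rw [← comp_assoc, A.coassoc, comp_assoc]
        _ = (f.rTensor C).rTensor C ∘ₗ ρ.rTensor C ∘ₗ ρ := by
            rw [← hρ, ← comp_assoc, ← rTensor_comp, ← hρ, rTensor_comp, comp_assoc]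
    exact LinearMap.ext fun x => hff (LinearMap.congr_fun key x)

end

def IsSubcomodule (A : GComod k C) (W : Submodule k A.carrier) : Prop :=
  ∀ w ∈ W, A.ρ w ∈ range (W.subtype.rTensor C)

variable {A : GComod k C}

theorem isSubcomodule_bot : A.IsSubcomodule ⊥ := by
  intro w hw
  rw [(Submodule.mem_bot k).1 hw, map_zero]
  exact zero_mem _

theorem IsSubcomodule.sup {W₁ W₂ : Submodule k A.carrier} (h₁ : A.IsSubcomodule W₁)
    (h₂ : A.IsSubcomodule W₂) : A.IsSubcomodule (W₁ ⊔ W₂) := by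
  intro w hw
  obtain ⟨w₁, hw₁, w₂, hw₂, rfl⟩ := Submodule.mem_sup.1 hw
  rw [map_add]
  exact add_mem (range_rTensor_subtype_mono le_sup_left (h₁ w₁ hw₁))
    (range_rTensor_subtype_mono le_sup_right (h₂ w₂ hw₂))

/-- The fundamental theorem of comodules. The subcomodule is spanned by the right slices
`(id ⊗ φ) (ρ x)`; it is stable under `ρ` by coassociativity and contains `x` by counitality. -/
theorem exists_finiteDimensional_isSubcomodule_mem (A : GComod k C) (x : A.carrier) :
    ∃ W : Submodule k A.carrier, FiniteDimensional k W ∧ x ∈ W ∧ A.IsSubcomodule W := by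
  obtain ⟨s, hρx, hs⟩ := exists_finset_mem_range_rTensor_span (A.ρ x)
  set W := Submodule.span k (s : Set A.carrier)
  have mem_of_mem_range (φ : C →ₗ[k] k) {u : A.carrier ⊗[k] C}
      (hu : u ∈ range (W.subtype.rTensor C)) : sliceRight φ u ∈ W := by
    obtain ⟨v, rfl⟩ := hu
    rw [sliceRight_rTensor]
    exact (sliceRight φ v).2
  refine ⟨W, FiniteDimensional.span_finset k s, ?_, ?_⟩
  · have hx : sliceRight Coalgebra.counit (A.ρ x) = x := LinearMap.congr_fun A.counit x
    exact hx ▸ mem_of_mem_range _ hρx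
  · suffices (s : Set A.carrier) ⊆ (range (W.subtype.rTensor C)).comap A.ρ from
      fun w hw => Submodule.span_le.2 this hw
    intro y hy
    obtain ⟨φ, rfl⟩ := hs y hy
    obtain ⟨v, hv⟩ := hρx
    refine ⟨(sliceRight φ ∘ₗ Coalgebra.comul).lTensor W v, ?_⟩
    calc W.subtype.rTensor C ((sliceRight φ ∘ₗ Coalgebra.comul).lTensor W v)
        = (sliceRight φ ∘ₗ Coalgebra.comul).lTensor A.carrier (A.ρ x) := by
          rw [← hv, ← LinearMap.comp_apply, ← LinearMap.comp_apply, lTensor_comp_rTensor,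
            rTensor_comp_lTensor]
      _ = sliceRight φ (gComulLast k C A.carrier (A.ρ x)) := by
          rw [← sliceRight_comp_gComulLast, LinearMap.comp_apply]
      _ = sliceRight φ (A.ρ.rTensor C (A.ρ x)) := congr_arg _ (LinearMap.congr_fun A.coassoc x)
      _ = A.ρ (sliceRight φ (A.ρ x)) := sliceRight_rTensor _ _ _

section

variable {W W₁ W₂ : Submodule k A.carrier}

def IsSubcomodule.coaction (hW : A.IsSubcomodule W) : W →ₗ[k] W ⊗[k] C :=
  (LinearEquiv.ofInjective _ (injective_rTensor_subtype (D := C) W)).symm ∘ₗ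
    (A.ρ ∘ₗ W.subtype).codRestrict _ fun w => hW w w.2

theorem IsSubcomodule.rTensor_subtype_comp_coaction (hW : A.IsSubcomodule W) :
    W.subtype.rTensor C ∘ₗ hW.coaction = A.ρ ∘ₗ W.subtype := by
  ext w
  exact LinearEquiv.ofInjective_symm_apply _ (h := injective_rTensor_subtype (D := C) W) _

def sub (W : Submodule k A.carrier) (hW : A.IsSubcomodule W) : GComod k C :=
  A.ofInjective W.subtype W.injective_subtype hW.coaction hW.rTensor_subtype_comp_coaction

def subι (W : Submodule k A.carrier) (hW : A.IsSubcomodule W) : A.sub W hW ⟶ A :=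
  ⟨W.subtype, hW.rTensor_subtype_comp_coaction⟩

instance mono_subι (W : Submodule k A.carrier) (hW : A.IsSubcomodule W) : Mono (subι W hW) :=
  ⟨fun _ _ hgh => Subtype.ext <| LinearMap.ext fun z => W.injective_subtype <|
    LinearMap.congr_fun (congr_arg Subtype.val hgh) z⟩

def subMap (h₁ : A.IsSubcomodule W₁) (h₂ : A.IsSubcomodule W₂) (h : W₁ ≤ W₂) :
    A.sub W₁ h₁ ⟶ A.sub W₂ h₂ := by
  refine ⟨Submodule.inclusion h, ?_⟩
  have hincl : W₂.subtype ∘ₗ Submodule.inclusion h = W₁.subtype :=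
    Submodule.subtype_comp_inclusion W₁ W₂ h
  change (Submodule.inclusion h).rTensor C ∘ₗ h₁.coaction =
    h₂.coaction ∘ₗ Submodule.inclusion h
  rw [← LinearMap.cancel_left (injective_rTensor_subtype (D := C) W₂), ← comp_assoc,
    ← rTensor_comp, hincl, h₁.rTensor_subtype_comp_coaction, ← comp_assoc,
    h₂.rTensor_subtype_comp_coaction, comp_assoc, hincl]

@[simp]
theorem subMap_comp_subι (h₁ : A.IsSubcomodule W₁) (h₂ : A.IsSubcomodule W₂)
    (h : W₁ ≤ W₂) : subMap h₁ h₂ h ≫ subι W₂ h₂ = subι W₁ h₁ :=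
  rfl

end

abbrev FinDimSubcomodule (A : GComod k C) : Type u :=
  {W : Submodule k A.carrier // FiniteDimensional k W ∧ A.IsSubcomodule W}

theorem eq_zero_of_forall_subι_comp_eq_zero {B : GComod k C} (g : A ⟶ B)
    (h : ∀ W : A.FinDimSubcomodule, subι W.1 W.2.2 ≫ g = 0) : g = 0 := by
  refine Subtype.ext (LinearMap.ext fun x => ?_)
  obtain ⟨W, hfd, hx, hW⟩ := exists_finiteDimensional_isSubcomodule_mem A x
  exact LinearMap.congr_fun (congr_arg Subtype.val (h ⟨W, hfd, hW⟩)) ⟨x, hx⟩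

variable (k C)

abbrev regular : GComod k C where
  carrier := C
  ρ := Coalgebra.comul
  counit := by
    ext c
    simp [gCounitLast]
  coassoc := by
    rw [gComulLast, comp_assoc]
    exact Coalgebra.coassoc_symm

variable {k C}

theorem hom_regular_eq {A : GComod k C} (f : A ⟶ regular k C) :
    f.1 = (TensorProduct.lid k C).toLinearMap ∘ₗ
      (Coalgebra.counit ∘ₗ f.1).rTensor C ∘ₗ A.ρ := by
  have hf : f.1.rTensor C ∘ₗ A.ρ = Coalgebra.comul ∘ₗ f.1 := f.2
  rw [rTensor_comp, comp_assoc, hf]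
  ext x
  simp

theorem finiteDimensional_hom_regular (A : GComod k C) [FiniteDimensional k A.carrier] :
    FiniteDimensional k (A ⟶ regular k C) := by
  let toDual := LinearMap.llcomp k A.carrier C k Coalgebra.counit ∘ₗ
    (gHom k C A (regular k C)).subtype
  refine FiniteDimensional.of_injective toDual fun f g hfg => Subtype.ext ?_
  have hfg : Coalgebra.counit ∘ₗ f.1 = Coalgebra.counit ∘ₗ g.1 := hfg
  rw [hom_regular_eq f, hom_regular_eq g, hfg]

end GComod

theorem Submodule.exists_eq_top_of_directed_iSup_eq_top {R M : Type*} [Ring R] [AddCommGroup M]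
    [Module R M] [Module.Finite R M] {ι : Type*} [Nonempty ι] {F : ι → Submodule R M}
    (hdir : Directed (· ≤ ·) F) (htop : ⨆ i, F i = ⊤) : ∃ i, F i = ⊤ := by
  have hcompact : IsCompactElement (⊤ : Submodule R M) :=
    (Submodule.fg_iff_compact ⊤).1 Module.Finite.fg_top
  obtain ⟨_, ⟨i, rfl⟩, hi⟩ :=
    (CompleteLattice.isCompactElement_iff_le_of_directed_sSup_le _ _).1 hcompact (Set.range F)
      (Set.range_nonempty F) hdir.directedOn_range (by rw [sSup_range, htop])
  exact ⟨i, top_le_iff.1 hi⟩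

namespace ModuleCat

variable {S : Type u} [Ring S]

theorem iSup_range_eq_top_of_forall_comp_eq_zero {ι : Type*} {X : ι → ModuleCat.{u} S}
    {M : ModuleCat.{u} S} (f : ∀ i, X i ⟶ M)
    (h : ∀ (Y : ModuleCat.{u} S) (q : M ⟶ Y), (∀ i, f i ≫ q = 0) → q = 0) :
    ⨆ i, range (f i).hom = ⊤ := by
  set N := ⨆ i, range (f i).hom
  have hq := h (of S (M ⧸ N)) (ofHom N.mkQ) fun i => by
    ext x
    exact (Submodule.Quotient.mk_eq_zero N).2 (le_iSup (fun i => range (f i).hom) i ⟨x, rfl⟩)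
  rw [← Submodule.ker_mkQ N, ← hom_ofHom N.mkQ, hq, hom_zero, ker_zero]

def homSelfLinearEquiv {A : Type u} [Ring A] [Algebra k A] (M : ModuleCat.{u} A) :
    (of A A ⟶ M) ≃ₗ[k] M :=
  homLinearEquiv.trans (LinearMap.ringLmapEquivSelf A k M)

variable {D : Type*} [Category D] [Preadditive D] [Linear k D]

section

variable {A : Type u} [Ring A] [Algebra k A] (F : ModuleCat.{u} A ⥤ D) [F.Additive]
  [F.Linear k] [F.Faithful]

theorem finiteDimensional_of_finiteDimensional_hom_map (M : ModuleCat.{u} A)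
    [FiniteDimensional k (F.obj (of A A) ⟶ F.obj M)] : FiniteDimensional k M :=
  have : FiniteDimensional k (of A A ⟶ M) :=
    FiniteDimensional.of_injective (F.mapLinearMap k) F.map_injective
  (homSelfLinearEquiv k M).finiteDimensional

theorem finite_of_finiteDimensional_hom_map (M : ModuleCat.{u} A)
    [FiniteDimensional k (F.obj (of A A) ⟶ F.obj M)] : Module.Finite A M := by
  have := finiteDimensional_of_finiteDimensional_hom_map k F M
  exact Module.Finite.of_restrictScalars_finite k A M

end

theorem finiteDimensional_of_finiteDimensional_end_map {A : Type u} [Ring A] [Algebra k A]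
    (F : ModuleCat.{u} Aᵐᵒᵖ ⥤ D) [F.Additive] [F.Linear k] [F.Faithful]
    [FiniteDimensional k (F.obj (of Aᵐᵒᵖ Aᵐᵒᵖ) ⟶ F.obj (of Aᵐᵒᵖ Aᵐᵒᵖ))] :
    FiniteDimensional k A := by
  -- Otherwise instance search finds the `k`-module structure of `Aᵐᵒᵖ` itself.
  let _ : Module k (of Aᵐᵒᵖ Aᵐᵒᵖ) := moduleOfAlgebraModule _
  have := finiteDimensional_of_finiteDimensional_hom_map k F (of Aᵐᵒᵖ Aᵐᵒᵖ)
  let e : A ≃ₗ[k] of Aᵐᵒᵖ Aᵐᵒᵖ :=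
    { MulOpposite.opAddEquiv with
      map_smul' := fun c a => by
        change MulOpposite.op (c • a) = algebraMap k Aᵐᵒᵖ c * MulOpposite.op a
        rw [Algebra.smul_def, Algebra.commutes, MulOpposite.op_mul,
          MulOpposite.algebraMap_apply] }
  exact e.symm.finiteDimensional

end ModuleCat

namespace GComod

variable {k} {C}
variable {S : Type u} [Ring S] (E : ModuleCat.{u} S ≌ GComod k C)

theorem range_inverse_map_subι_mono {A : GComod k C} {W₁ W₂ : Submodule k A.carrier}
    (h₁ : A.IsSubcomodule W₁) (h₂ : A.IsSubcomodule W₂) (h : W₁ ≤ W₂) :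
    range (E.inverse.map (subι W₁ h₁)).hom ≤
      range (E.inverse.map (subι W₂ h₂)).hom := by
  rw [← subMap_comp_subι h₁ h₂ h, Functor.map_comp, ModuleCat.hom_comp]
  exact range_comp_le_range _ _

variable [E.functor.Additive]

/-- A map out of `A` vanishing on every finite-dimensional subcomodule vanishes; transport this
along the adjunction `E⁻¹ ⊣ E`. -/
theorem iSup_range_inverse_map_subι_eq_top (A : GComod k C) :
    ⨆ W : A.FinDimSubcomodule, range (E.inverse.map (subι W.1 W.2.2)).hom = ⊤ := by
  refine ModuleCat.iSup_range_eq_top_of_forall_comp_eq_zero _ fun Y q hq => ?_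
  let adj : E.inverse ⊣ E.functor := E.symm.toAdjunction
  refine (adj.homAddEquiv A Y).map_eq_zero_iff.1 <|
    eq_zero_of_forall_subι_comp_eq_zero _ fun W => ?_
  rw [Adjunction.homAddEquiv_apply, ← adj.homEquiv_naturality_left, hq W, adj.homAddEquiv_zero]

theorem finiteDimensional_of_finite_inverse_obj (A : GComod k C)
    [Module.Finite S (E.inverse.obj A)] : FiniteDimensional k A.carrier := by
  have : Nonempty A.FinDimSubcomodule := ⟨⟨⊥, inferInstance, isSubcomodule_bot⟩⟩
  have hdir : Directed (· ≤ ·) fun W : A.FinDimSubcomodule =>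
      range (E.inverse.map (subι W.1 W.2.2)).hom := by
    rintro ⟨W₁, _, h₁⟩ ⟨W₂, _, h₂⟩
    refine ⟨⟨W₁ ⊔ W₂, inferInstance, h₁.sup h₂⟩, ?_, ?_⟩
    · exact range_inverse_map_subι_mono E _ _ le_sup_left
    · exact range_inverse_map_subι_mono E _ _ le_sup_right
  obtain ⟨⟨W, hfd, hW⟩, htop⟩ := Submodule.exists_eq_top_of_directed_iSup_eq_top hdir
    (iSup_range_inverse_map_subι_eq_top E A)
  have : Epi (E.inverse.map (subι W hW)) :=
    (ModuleCat.epi_iff_surjective _).2 (range_eq_top.1 htop)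
  have : IsIso (E.inverse.map (subι W hW)) := isIso_of_mono_of_epi _
  have : IsIso (subι W hW) := isIso_of_reflects_iso _ E.inverse
  have : FiniteDimensional k ((gforget k C).obj (sub W hW)) := hfd
  exact ((gforget k C).mapIso (asIso (subι W hW))).toLinearEquiv.finiteDimensional

end GComod

/-- If there is a `k`-linear equivalence between the category of right
`R`-modules and the category of right `C`-comodules, then both `R` and `C` are finite
dimensional over `k`. -/
theorem finiteDimensional_of_equiv_modules_comodules
    (R : Type u) [Ring R] [Algebra k R]
    (E : ModuleCat.{u} Rᵐᵒᵖ ≌ GComod k C)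
    [E.functor.Additive] [E.functor.Linear k] :
    FiniteDimensional k R ∧ FiniteDimensional k C := by
  let reg := ModuleCat.of Rᵐᵒᵖ Rᵐᵒᵖ
  let P := E.functor.obj reg
  have : Module.Finite Rᵐᵒᵖ (E.inverse.obj P) :=
    have : Module.Finite Rᵐᵒᵖ reg := Module.Finite.self Rᵐᵒᵖ
    Module.Finite.equiv
      (show reg ≃ₗ[Rᵐᵒᵖ] E.inverse.obj P from (E.unitIso.app reg).toLinearEquiv)
  have : FiniteDimensional k P.carrier := GComod.finiteDimensional_of_finite_inverse_obj E P
  have : FiniteDimensional k (P ⟶ P) := inferInstanceAs (FiniteDimensional k (gHom k C P P))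
  refine ⟨ModuleCat.finiteDimensional_of_finiteDimensional_end_map k E.functor, ?_⟩
  let M := E.inverse.obj (GComod.regular k C)
  have := GComod.finiteDimensional_hom_regular P
  have : FiniteDimensional k (P ⟶ E.functor.obj M) :=
    (show (P ⟶ GComod.regular k C) ≃ₗ[k] (P ⟶ E.functor.obj M) from
      Linear.homCongr k (Iso.refl P) (E.counitIso.app _).symm).finiteDimensional
  have : Module.Finite Rᵐᵒᵖ M := ModuleCat.finite_of_finiteDimensional_hom_map k E.functor M
  exact GComod.finiteDimensional_of_finite_inverse_obj E (GComod.regular k C)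

end
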